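/- arXiv:1907.04862 — 8 statements merged into one kernel-verified Lean document; each statement's English description precedes it below -/
import Mathlib

section
/- Let Y and Z be finite-dimensional subspaces of a Hilbert space H and 0 ≤ δ < 1. Then Y and Z are δ-close (i.e., the map M = P restricted as ι_Y† ι_Z is a bijection with all singular values at least √(1−δ)) if and only if (1) min over unit vectors φ ∈ Z of ‖P_Y φ‖² ≥ 1−δ, and (2) dim Y ≤ dim Z. -/
/- STATEMENT 0: symmetry lemma: `Y` and `Z` are δ-close iff `Y` is δ-almost-majorizing
for `Z` and `dim Y ≤ dim Z`. -/

variable {H : Type*} [NormedAddCommGroup H] [InnerProductSpace ℂ H] [FiniteDimensional ℂ H]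

/-- The map `ι_Y† ι_Z : Z → Y`, sending `z ∈ Z` to the orthogonal projection of `z` onto `Y`. -/
noncomputable def overlapMap (Y Z : Submodule ℂ H) : Z → Y :=
  fun z => Y.orthogonalProjectionOnto (z : H)

/-- `Y` and `Z` are δ-close: `M = ι_Y† ι_Z` is a bijection and all of its singular values are
at least `√(1-δ)`; the singular value condition is expressed equivalently as
`‖M z‖² ≥ (1-δ)‖z‖²` for all `z ∈ Z`. -/
noncomputable def IsDeltaClose (δ : ℝ) (Y Z : Submodule ℂ H) : Prop :=
  Function.Bijective (overlapMap Y Z) ∧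
    ∀ z : Z, (1 - δ) * ‖(z : H)‖ ^ 2 ≤ ‖(overlapMap Y Z z : H)‖ ^ 2

/-- `Y` is δ-almost-majorizing for `Z`: every unit vector `φ ∈ Z` has `‖P_Y φ‖² ≥ 1-δ`. -/
noncomputable def AlmostMajorizing (δ : ℝ) (Y Z : Submodule ℂ H) : Prop :=
  ∀ φ ∈ Z, ‖φ‖ = 1 → 1 - δ ≤ ‖((Y.orthogonalProjectionOnto φ : Y) : H)‖ ^ 2

/-- `overlapMap` as a linear map. -/
noncomputable def overlapLinear (Y Z : Submodule ℂ H) : Z →ₗ[ℂ] Y :=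
  (Y.orthogonalProjectionOnto).toLinearMap.comp Z.subtype

lemma overlapLinear_apply (Y Z : Submodule ℂ H) (z : Z) :
    overlapLinear Y Z z = overlapMap Y Z z := rfl

theorem stmt0 (δ : ℝ) (hδ0 : 0 ≤ δ) (hδ1 : δ < 1) (Y Z : Submodule ℂ H) :
    IsDeltaClose δ Y Z ↔
      AlmostMajorizing δ Y Z ∧ Module.finrank ℂ Y ≤ Module.finrank ℂ Z := by
  constructor
  · rintro ⟨hbij, hnorm⟩
    constructor
    · intro φ hφ hφ1
      have := hnorm ⟨φ, hφ⟩
      simpa [overlapMap, hφ1] using this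
    · have e : Z ≃ₗ[ℂ] Y := LinearEquiv.ofBijective (overlapLinear Y Z) hbij
      exact le_of_eq e.finrank_eq.symm
  · rintro ⟨hmaj, hrank⟩
    have key : ∀ z : Z, (1 - δ) * ‖(z : H)‖ ^ 2 ≤ ‖(overlapMap Y Z z : H)‖ ^ 2 := by
      intro z
      rcases eq_or_ne (z : H) 0 with h0 | h0
      · simp [overlapMap, h0]
      · have hz : (0:ℝ) < ‖(z : H)‖ := norm_pos_iff.mpr h0
        set φ : H := (‖(z : H)‖⁻¹ : ℂ) • (z : H) with hφdef
        have hφZ : φ ∈ Z := Z.smul_mem _ z.2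
        have hφ1 : ‖φ‖ = 1 := by
          simp [hφdef, norm_smul, inv_mul_cancel₀ hz.ne']
        have h := hmaj φ hφZ hφ1
        have hproj : ((Y.orthogonalProjectionOnto φ : Y) : H)
            = (‖(z : H)‖⁻¹ : ℂ) • ((Y.orthogonalProjectionOnto (z : H) : Y) : H) := by
          simp [hφdef, map_smul]
        rw [hproj] at h
        rw [norm_smul] at h
        have h2 : 1 - δ ≤ ‖(z : H)‖⁻¹ ^ 2 * ‖((Y.orthogonalProjectionOnto (z : H) : Y) : H)‖ ^ 2 := by
          calc 1 - δ ≤ (‖(‖(z : H)‖⁻¹ : ℂ)‖ * ‖((Y.orthogonalProjectionOnto (z : H) : Y) : H)‖) ^ 2 := h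
          _ = ‖(z : H)‖⁻¹ ^ 2 * ‖((Y.orthogonalProjectionOnto (z : H) : Y) : H)‖ ^ 2 := by
              rw [mul_pow]
              norm_num [abs_of_nonneg (inv_nonneg.mpr hz.le)]
        have h3 := mul_le_mul_of_nonneg_right h2 (sq_nonneg ‖(z : H)‖)
        calc (1 - δ) * ‖(z : H)‖ ^ 2 ≤ (‖(z : H)‖⁻¹ ^ 2 * ‖((Y.orthogonalProjectionOnto (z : H) : Y) : H)‖ ^ 2) * ‖(z : H)‖ ^ 2 := h3
          _ = ‖(overlapMap Y Z z : H)‖ ^ 2 := by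
              field_simp [overlapMap]
              rfl

    refine ⟨?_, key⟩
    have hinj : Function.Injective (overlapLinear Y Z) := by
      rw [injective_iff_map_eq_zero]
      intro z hz
      by_contra hne
      have hz0 : (z : H) ≠ 0 := fun h => hne (Subtype.ext h)
      have hpos : (0:ℝ) < (1 - δ) * ‖(z : H)‖ ^ 2 :=
        mul_pos (by linarith) (pow_pos (norm_pos_iff.mpr hz0) 2)
      have := key z
      rw [← overlapLinear_apply, hz] at this
      simp at this
      nlinarith
    have hrank2 : Module.finrank ℂ Z ≤ Module.finrank ℂ Y :=
      LinearMap.finrank_le_finrank_of_injective hinj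
    have heq : Module.finrank ℂ Z = Module.finrank ℂ Y := le_antisymm hrank2 hrank
    have hsurj : Function.Surjective (overlapLinear Y Z) := by
      have := (overlapLinear Y Z).injective_iff_surjective_of_finrank_eq_finrank heq
      exact this.mp hinj
    exact ⟨hinj, hsurj⟩
end

section
/- Suppose Y ⊆ H is (1−ε)-majorizing for Z ⊆ H (both subspaces of a bipartite space H = H_L ⊗ H_R), and V ⊆ H_L is δ-viable for Y. Then V is δ'-viable for Z, where δ' = δ + ε + 2√(δε), and moreover δ' ≤ min{2(δ+ε), δ + 3√ε}. -/
/- STATEMENT 2: if `Y` is `(1-ε)`-majorizing for `Z` and `V ⊆ H_L` is δ-viable for `Y`,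
then `V` is δ'-viable for `Z` with `δ' = δ + ε + 2√(δε)`, and moreover
`δ' ≤ min {2(δ+ε), δ + 3√ε}`. -/

variable {ι κ : Type*} [Fintype ι] [Fintype κ] [DecidableEq ι] [DecidableEq κ]

/-- The subspace `V ⊗ H_R` of `H_L ⊗ H_R`. -/
def extendR (V : Submodule ℂ (EuclideanSpace ℂ ι)) :
    Submodule ℂ (EuclideanSpace ℂ (ι × κ)) where
  carrier := {ψ | ∀ j : κ, WithLp.toLp 2 (fun i => ψ (i, j)) ∈ V}
  add_mem' := fun ha hb j => V.add_mem (ha j) (hb j)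
  zero_mem' := fun j => V.zero_mem
  smul_mem' := fun c a ha j => V.smul_mem c (ha j)

/-- `A` is μ-majorizing for `B`: every unit vector `ψ ∈ B` satisfies `‖P_A ψ‖² ≥ μ`. -/
noncomputable def IsMajorizing (μ : ℝ) (A B : Submodule ℂ (EuclideanSpace ℂ (ι × κ))) : Prop :=
  ∀ ψ ∈ B, ‖ψ‖ = 1 → μ ≤ ‖((A.orthogonalProjection ψ : A) : EuclideanSpace ℂ (ι × κ))‖ ^ 2

/-- `V ⊆ H_L` is δ-viable for `W ⊆ H_L ⊗ H_R`. -/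
noncomputable def IsViable (δ : ℝ) (V : Submodule ℂ (EuclideanSpace ℂ ι))
    (W : Submodule ℂ (EuclideanSpace ℂ (ι × κ))) : Prop :=
  IsMajorizing (1 - δ) (extendR (κ := κ) V) W

open Submodule

lemma aux_sqrt {a b : ℝ} (ha : 0 ≤ a) (h : a ^ 2 ≤ b) : a ≤ Real.sqrt b := by
  have := Real.sqrt_le_sqrt h
  rwa [Real.sqrt_sq ha] at this

/-- Scaled version of majorization: for `y ∈ B`, `‖P_{Aᗮ} y‖² ≤ δ ‖y‖²`. -/
lemma aux_scaled {δ : ℝ} (hδ0 : 0 ≤ δ)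
    (A B : Submodule ℂ (EuclideanSpace ℂ (ι × κ)))
    (h : IsMajorizing (1 - δ) A B) {y : EuclideanSpace ℂ (ι × κ)} (hy : y ∈ B) :
    ‖((orthogonalProjection Aᗮ y : Aᗮ) : EuclideanSpace ℂ (ι × κ))‖ ^ 2 ≤ δ * ‖y‖ ^ 2 := by
  rcases eq_or_ne y 0 with rfl | hy0
  · simp [hδ0]
  · set c : ℂ := (‖y‖ : ℂ)⁻¹ with hc
    have hny : (0:ℝ) < ‖y‖ := norm_pos_iff.2 hy0
    have hcn : ‖c‖ = ‖y‖⁻¹ := by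
      rw [hc, norm_inv, Complex.norm_real, Real.norm_eq_abs, abs_of_nonneg hny.le]
    have hu : ‖c • y‖ = 1 := by
      rw [norm_smul, hcn, inv_mul_cancel₀ hny.ne']
    have h1 := h (c • y) (B.smul_mem c hy) hu
    have hP : ((orthogonalProjection A (c • y) : A) : EuclideanSpace ℂ (ι × κ))
        = c • ((orthogonalProjection A y : A) : EuclideanSpace ℂ (ι × κ)) := by
      rw [map_smul]; rfl
    rw [hP, norm_smul, hcn] at h1
    have hpyth := norm_sq_eq_add_norm_sq_projection y A
    have hcoe1 : ‖orthogonalProjection A y‖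
        = ‖((orthogonalProjection A y : A) : EuclideanSpace ℂ (ι × κ))‖ := rfl
    have hcoe2 : ‖orthogonalProjection Aᗮ y‖
        = ‖((orthogonalProjection Aᗮ y : Aᗮ) : EuclideanSpace ℂ (ι × κ))‖ := rfl
    rw [hcoe1, hcoe2] at hpyth
    have h2 : (1 - δ) * ‖y‖ ^ 2 ≤
        ‖((orthogonalProjection A y : A) : EuclideanSpace ℂ (ι × κ))‖ ^ 2 := by
      have h3 := mul_le_mul_of_nonneg_right h1 (sq_nonneg ‖y‖)
      calc (1 - δ) * ‖y‖ ^ 2 ≤ (‖y‖⁻¹ * ‖((orthogonalProjection A y : A) :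
            EuclideanSpace ℂ (ι × κ))‖) ^ 2 * ‖y‖ ^ 2 := h3
        _ = _ := by field_simp
    nlinarith [h2, hpyth]

set_option maxHeartbeats 1000000 in
theorem stmt2 (δ ε : ℝ) (hδ0 : 0 ≤ δ) (hδ1 : δ ≤ 1) (hε0 : 0 ≤ ε) (hε1 : ε ≤ 1)
    (Y Z : Submodule ℂ (EuclideanSpace ℂ (ι × κ)))
    (V : Submodule ℂ (EuclideanSpace ℂ ι))
    (hY : IsMajorizing (1 - ε) Y Z) (hV : IsViable δ V Y) :
    IsViable (δ + ε + 2 * Real.sqrt (δ * ε)) V Z ∧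
      δ + ε + 2 * Real.sqrt (δ * ε) ≤ min (2 * (δ + ε)) (δ + 3 * Real.sqrt ε) := by
  have hsd := Real.sq_sqrt hδ0
  have hse := Real.sq_sqrt hε0
  have hsd0 := Real.sqrt_nonneg δ
  have hse0 := Real.sqrt_nonneg ε
  have hmul : Real.sqrt (δ * ε) = Real.sqrt δ * Real.sqrt ε := Real.sqrt_mul hδ0 ε
  have hsd1 : Real.sqrt δ ≤ 1 := by nlinarith [Real.sqrt_nonneg δ]
  have hse1 : Real.sqrt ε ≤ 1 := by nlinarith [Real.sqrt_nonneg ε]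
  constructor
  · set A := extendR (κ := κ) V with hA
    intro ψ hψ hψ1
    set y : EuclideanSpace ℂ (ι × κ) := (orthogonalProjection Y ψ : EuclideanSpace ℂ (ι × κ))
      with hy
    have hyY : y ∈ Y := (orthogonalProjection Y ψ).2
    have hpythY := norm_sq_eq_add_norm_sq_projection ψ Y
    rw [hψ1] at hpythY
    have hcoeY : ‖orthogonalProjection Y ψ‖ = ‖y‖ := rfl
    rw [hcoeY] at hpythY
    have hsub : ψ - y = (orthogonalProjection Yᗮ ψ : EuclideanSpace ℂ (ι × κ)) := by
      have h : ((orthogonalProjection Y ψ : Y) : EuclideanSpace ℂ (ι × κ))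
          + ((orthogonalProjection Yᗮ ψ : Yᗮ) : EuclideanSpace ℂ (ι × κ)) = ψ :=
        Submodule.starProjection_add_starProjection_orthogonal ψ
      rw [hy]
      linear_combination (norm := module) -h
    have hylow : 1 - ε ≤ ‖y‖ ^ 2 := hY ψ hψ hψ1
    have hsubsq : ‖ψ - y‖ ^ 2 ≤ ε := by
      rw [hsub]
      have hc : ‖orthogonalProjection Yᗮ ψ‖ =
          ‖((orthogonalProjection Yᗮ ψ : Yᗮ) : EuclideanSpace ℂ (ι × κ))‖ := rfl
      rw [← hc]
      nlinarith
    have hynorm2 : ‖y‖ ^ 2 ≤ 1 := by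
      nlinarith [norm_nonneg (orthogonalProjection Yᗮ ψ)]
    -- bound on ‖P_{Aᗮ} y‖
    have hQy : ‖((orthogonalProjection Aᗮ y : Aᗮ) : EuclideanSpace ℂ (ι × κ))‖
        ≤ Real.sqrt δ := by
      refine aux_sqrt (norm_nonneg _) ?_
      have := aux_scaled hδ0 A Y hV hyY
      nlinarith
    -- Q is nonexpansive on ψ - y
    have hQsub : ‖((orthogonalProjection Aᗮ (ψ - y) : Aᗮ) : EuclideanSpace ℂ (ι × κ))‖
        ≤ Real.sqrt ε := by
      refine aux_sqrt (norm_nonneg _) ?_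
      have hp := norm_sq_eq_add_norm_sq_projection (ψ - y) A
      have hc : ‖orthogonalProjection Aᗮ (ψ - y)‖ =
          ‖((orthogonalProjection Aᗮ (ψ - y) : Aᗮ) : EuclideanSpace ℂ (ι × κ))‖ := rfl
      rw [hc] at hp
      nlinarith [norm_nonneg (orthogonalProjection A (ψ - y))]
    -- triangle inequality
    have hQψ : ‖((orthogonalProjection Aᗮ ψ : Aᗮ) : EuclideanSpace ℂ (ι × κ))‖
        ≤ Real.sqrt δ + Real.sqrt ε := by
      have hadd : ((orthogonalProjection Aᗮ ψ : Aᗮ) : EuclideanSpace ℂ (ι × κ))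
          = ((orthogonalProjection Aᗮ y : Aᗮ) : EuclideanSpace ℂ (ι × κ))
            + ((orthogonalProjection Aᗮ (ψ - y) : Aᗮ) : EuclideanSpace ℂ (ι × κ)) := by
        have hψeq : ψ = y + (ψ - y) := by abel
        rw [show orthogonalProjection Aᗮ ψ = orthogonalProjection Aᗮ (y + (ψ - y)) from by
          rw [← hψeq], map_add]
        rfl
      rw [hadd]
      exact le_trans (norm_add_le _ _) (add_le_add hQy hQsub)
    have hpythA := norm_sq_eq_add_norm_sq_projection ψ A
    rw [hψ1] at hpythA
    have hc1 : ‖orthogonalProjection A ψ‖ =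
        ‖((orthogonalProjection A ψ : A) : EuclideanSpace ℂ (ι × κ))‖ := rfl
    have hc2 : ‖orthogonalProjection Aᗮ ψ‖ =
        ‖((orthogonalProjection Aᗮ ψ : Aᗮ) : EuclideanSpace ℂ (ι × κ))‖ := rfl
    rw [hc1, hc2] at hpythA
    rw [hmul]
    nlinarith [norm_nonneg ((orthogonalProjection Aᗮ ψ : Aᗮ) : EuclideanSpace ℂ (ι × κ))]
  · rw [hmul]
    refine le_min ?_ ?_
    · nlinarith [sq_nonneg (Real.sqrt δ - Real.sqrt ε)]
    · nlinarith [mul_nonneg hsd0 hse0, mul_le_of_le_one_left hse0 hsd1]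
end

section
/- Let H ∈ Herm(H_L ⊗ H_R) be a Hermitian operator with spectrum contained in (−∞, a−Δ] ∪ [a, b] where 8Δ ≤ b−a and Δ > 0. Let Y be the spectral subspace of H for eigenvalues ≤ a−Δ. Then the operator A = γ·T_m(Id − 2(H − a·Id)/(b−a)), with T_m the m-th Chebyshev polynomial of the first kind and γ = (T_m(1 + 2Δ/(b−a)))^{−1}, satisfies: A commutes with P_Y, ι_Y† A ι_Y ⪰ Id_Y, and ‖A ι_{Y⊥}‖ ≤ √σ with σ ≤ 2·exp(−m·√(2Δ/(b−a))). -/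
/- STATEMENT 5: the rescaled Chebyshev operator `A = γ·T_m(Id − 2(H−a·Id)/(b−a))` is an
approximate projector for the low-energy spectral subspace `Y` of a Hermitian `H` with
spectrum in `(−∞, a−Δ] ∪ [a, b]`, with shrinking factor `σ ≤ 2·exp(−m√(2Δ/(b−a)))`. -/

open Polynomial

section ChebAux

lemma cheb_closed : ∀ (m : ℕ) {u : ℝ}, u ≠ 0 →
    (Chebyshev.T ℝ (m : ℤ)).eval ((u + u⁻¹) / 2) = (u ^ m + u⁻¹ ^ m) / 2 := by
  intro m
  induction m using Nat.strong_induction_on with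
  | _ m ih =>
    intro u hu
    match m with
    | 0 => simp [Polynomial.Chebyshev.T_zero]
    | 1 => simp [Polynomial.Chebyshev.T_one]
    | (k+2) =>
      have h1 := ih k (by omega) hu
      have h2 := ih (k+1) (by omega) hu
      rw [show ((k+2:ℕ):ℤ) = (k:ℤ)+2 by push_cast; ring, Polynomial.Chebyshev.T_add_two]
      simp only [eval_sub, eval_mul, eval_X, eval_ofNat]
      rw [show ((k:ℤ)+1) = ((k+1:ℕ):ℤ) by push_cast; ring] at *
      rw [h2, h1]
      linear_combination (u ^ k + u⁻¹ ^ k) / 2 * mul_inv_cancel₀ hu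

lemma u_spec {x : ℝ} (hx : 1 ≤ x) :
    1 ≤ x + Real.sqrt (x^2 - 1) ∧
      ((x + Real.sqrt (x^2 - 1)) + (x + Real.sqrt (x^2 - 1))⁻¹) / 2 = x := by
  set s := Real.sqrt (x^2-1) with hsdef
  have hs0 : 0 ≤ s := Real.sqrt_nonneg _
  have hs : s^2 = x^2 - 1 := Real.sq_sqrt (by nlinarith)
  have hu1 : 1 ≤ x + s := by linarith
  have hmul : (x+s)*(x-s) = 1 := by nlinarith
  have hinv : (x+s)⁻¹ = x - s := inv_eq_of_mul_eq_one_right hmul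
  exact ⟨hu1, by rw [hinv]; ring⟩

lemma cheb_mono (m : ℕ) {x y : ℝ} (hx : 1 ≤ x) (hxy : x ≤ y) :
    (Chebyshev.T ℝ (m:ℤ)).eval x ≤ (Chebyshev.T ℝ (m:ℤ)).eval y := by
  have hy : 1 ≤ y := hx.trans hxy
  obtain ⟨hux, hvx⟩ := u_spec hx
  obtain ⟨huy, hvy⟩ := u_spec hy
  set ux := x + Real.sqrt (x^2-1) with hd1
  set uy := y + Real.sqrt (y^2-1) with hd2
  have huxy : ux ≤ uy := by
    have : Real.sqrt (x^2-1) ≤ Real.sqrt (y^2-1) := Real.sqrt_le_sqrt (by nlinarith)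
    simp only [hd1, hd2]; linarith
  rw [← hvx, ← hvy, cheb_closed m (by positivity), cheb_closed m (by positivity)]
  rw [inv_pow, inv_pow]
  set p := ux ^ m with hp
  set q := uy ^ m with hq
  have hp1 : 1 ≤ p := one_le_pow₀ hux
  have hpq : p ≤ q := pow_le_pow_left₀ (by linarith) huxy m
  have hq1 : 1 ≤ q := hp1.trans hpq
  have h1 : p⁻¹ - q⁻¹ = (q-p)/(p*q) := by field_simp
  have h2 : (q-p)/(p*q) ≤ q-p := div_le_self (by linarith) (by nlinarith)
  linarith

lemma cheb_one (n : ℤ) : (Chebyshev.T ℝ n).eval 1 = 1 := by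
  have := Polynomial.Chebyshev.T_real_cos 0 n
  simpa using this

lemma cheb_abs_le (n : ℤ) {x : ℝ} (h1 : -1 ≤ x) (h2 : x ≤ 1) :
    |(Chebyshev.T ℝ n).eval x| ≤ 1 := by
  have h := Real.cos_arccos h1 h2
  rw [← h, Polynomial.Chebyshev.T_real_cos]
  exact Real.abs_cos_le_one _

lemma cheb_lb (m : ℕ) {δ : ℝ} (h0 : 0 ≤ δ) (h1 : δ ≤ 1) :
    Real.exp (m * Real.sqrt δ) / 2 ≤ (Chebyshev.T ℝ (m:ℤ)).eval (1+δ) := by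
  obtain ⟨hu, hv⟩ := u_spec (show (1:ℝ) ≤ 1+δ by linarith)
  set s := Real.sqrt ((1+δ)^2 - 1) with hsdef
  set t := Real.sqrt δ with htdef
  have ht0 : 0 ≤ t := Real.sqrt_nonneg _
  have ht2 : t^2 = δ := Real.sq_sqrt h0
  have ht1 : t ≤ 1 := by
    rw [show (1:ℝ) = Real.sqrt 1 by simp [Real.sqrt_one]]
    exact Real.sqrt_le_sqrt h1
  have hs0 : 0 ≤ s := Real.sqrt_nonneg _
  have hs2 : s^2 = 2*δ + δ^2 := by rw [hsdef, Real.sq_sqrt (by nlinarith)]; ring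
  have hst : Real.sqrt 2 * t ≤ s := by
    have : Real.sqrt 2 * t = Real.sqrt (2*δ) := by
      rw [htdef, ← Real.sqrt_mul (by norm_num)]
    rw [this, hsdef]
    exact Real.sqrt_le_sqrt (by nlinarith)
  have hsqrt2 : 1 ≤ Real.sqrt 2 := by
    rw [show (1:ℝ) = Real.sqrt 1 by simp]
    exact Real.sqrt_le_sqrt (by norm_num)
  have hexp : Real.exp t ≤ 1 + δ + s := by
    have hb := Real.exp_bound (x := t) (by rw [abs_of_nonneg ht0]; exact ht1) (n := 2) (by norm_num)
    have hsum : ∑ i ∈ Finset.range 2, t ^ i / (i.factorial : ℝ) = 1 + t := by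
      simp [Finset.sum_range_succ]
    rw [hsum, abs_of_nonneg ht0] at hb
    have hb2 : Real.exp t ≤ 1 + t + t^2 * (3/2/2) := by
      norm_num [Nat.factorial] at hb
      have := abs_le.mp hb
      nlinarith [this.2]
    nlinarith [mul_le_mul_of_nonneg_right hsqrt2 ht0]
  have hvpos : (0:ℝ) ≤ (1 + δ + s)⁻¹ ^ m := by positivity
  have hup : Real.exp (m*t) ≤ (1+δ+s)^m := by
    rw [Real.exp_nat_mul]
    exact pow_le_pow_left₀ (Real.exp_nonneg t) hexp m
  have hclosed : (Chebyshev.T ℝ (m:ℤ)).eval (1+δ) = ((1+δ+s)^m + (1+δ+s)⁻¹^m)/2 := by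
    conv_lhs => rw [← hv]
    exact cheb_closed m (by positivity)
  rw [hclosed]
  linarith

end ChebAux

variable {H : Type*} [NormedAddCommGroup H] [InnerProductSpace ℂ H] [FiniteDimensional ℂ H]

theorem stmt5 (T : Module.End ℂ H) (hsym : T.IsSymmetric)
    (a b Δ : ℝ) (hΔ : 0 < Δ) (hab : 8 * Δ ≤ b - a)
    -- the spectrum of `T` is real and contained in `(−∞, a−Δ] ∪ [a, b]`
    (hspec : ∀ μ : ℂ, Module.End.HasEigenvalue T μ →
      ∃ x : ℝ, μ = (x : ℂ) ∧ (x ≤ a - Δ ∨ (a ≤ x ∧ x ≤ b)))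
    (m : ℕ)
    -- `Y` is the spectral subspace for eigenvalues `≤ a − Δ`
    (Y : Submodule ℂ H)
    (hY : Y = ⨆ (x : ℝ) (_ : x ≤ a - Δ), Module.End.eigenspace T (x : ℂ))
    (γ : ℝ) (hγ : γ = ((Polynomial.Chebyshev.T ℝ (m : ℤ)).eval (1 + 2 * Δ / (b - a)))⁻¹)
    (A : Module.End ℂ H)
    (hA : A = (γ : ℂ) • Polynomial.aeval T
      ((Polynomial.Chebyshev.T ℂ (m : ℤ)).comp
        (1 - Polynomial.C ((2 : ℂ) / ((b : ℂ) - (a : ℂ))) * (Polynomial.X - Polynomial.C (a : ℂ))))) :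
    -- `A` commutes with `P_Y`
    (A ∘ₗ (Y.subtype ∘ₗ (Y.orthogonalProjectionOnto : H →ₗ[ℂ] Y))
        = (Y.subtype ∘ₗ (Y.orthogonalProjectionOnto : H →ₗ[ℂ] Y)) ∘ₗ A) ∧
    -- `ι_Y† A ι_Y ⪰ Id_Y`
    (∀ y ∈ Y, ‖y‖ ^ 2 ≤ (inner ℂ y (A y) : ℂ).re) ∧
    -- `‖A ι_{Y⊥}‖ ≤ √σ` with `σ ≤ 2·exp(−m·√(2Δ/(b−a)))`
    (∃ σ : ℝ, σ ≤ 2 * Real.exp (-(m * Real.sqrt (2 * Δ / (b - a)))) ∧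
      ∀ x ∈ Yᗮ, ‖A x‖ ≤ Real.sqrt σ * ‖x‖) := by
  classical
  have hba : 0 < b - a := lt_of_lt_of_le (by linarith) hab
  have hδ'0 : 0 < 2 * Δ / (b - a) := by positivity
  have hδ'1 : 2 * Δ / (b - a) ≤ 1/4 := by
    rw [div_le_iff₀ hba]; linarith
  -- the normalizing value g = T_m(1 + δ')
  set g : ℝ := (Chebyshev.T ℝ (m:ℤ)).eval (1 + 2 * Δ / (b - a)) with hgdef
  have hg1 : 1 ≤ g := by
    have h := cheb_mono m (le_refl 1) (show (1:ℝ) ≤ 1 + 2*Δ/(b-a) by linarith)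
    rwa [cheb_one] at h
  have hγ0 : 0 < γ := by rw [hγ]; exact inv_pos.mpr (lt_of_lt_of_le one_pos hg1)
  have hγ1 : γ ≤ 1 := by
    rw [hγ]
    rw [inv_le_one_iff₀]
    right; linarith
  -- eigenbasis
  obtain ⟨n, hn⟩ : ∃ n, Module.finrank ℂ H = n := ⟨_, rfl⟩
  set e : OrthonormalBasis (Fin n) ℂ H := hsym.eigenvectorBasis hn with hedef
  set μ : Fin n → ℝ := hsym.eigenvalues hn with hμdef
  have hev : ∀ i, T.HasEigenvector ((μ i : ℝ) : ℂ) (e i) :=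
    fun i => hsym.hasEigenvector_eigenvectorBasis hn i
  -- location of eigenvalues
  have hloc : ∀ i, μ i ≤ a - Δ ∨ (a ≤ μ i ∧ μ i ≤ b) := by
    intro i
    obtain ⟨x, hx1, hx2⟩ := hspec ((μ i : ℝ) : ℂ)
      (Module.End.hasEigenvalue_of_hasEigenvector (hev i))
    have : x = μ i := by exact_mod_cast hx1.symm
    rwa [this] at hx2
  -- the scalar by which A acts on e i
  set c : Fin n → ℝ := fun i => γ * (Chebyshev.T ℝ (m:ℤ)).eval (1 - 2/(b-a) * (μ i - a))
    with hcdef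
  have hAe : ∀ i : Fin n, A (e i) = ((c i : ℝ) : ℂ) • e i := by
    intro i
    rw [hA]
    simp only [LinearMap.smul_apply]
    rw [Module.End.aeval_apply_of_hasEigenvector (hev i), smul_smul]
    congr 1
    rw [eval_comp]
    simp only [eval_sub, eval_mul, eval_one, eval_C, eval_X, hcdef]
    push_cast
    ring
  -- scalar bounds
  have hclow : ∀ i, μ i ≤ a - Δ → 1 ≤ c i := by
    intro i hi
    have harg : 1 + 2*Δ/(b-a) ≤ 1 - 2/(b-a) * (μ i - a) := by
      rw [← sub_nonneg, show (1 - 2/(b-a) * (μ i - a)) - (1 + 2*Δ/(b-a))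
          = 2*((a - Δ) - μ i)/(b-a) by field_simp <;> ring]
      exact div_nonneg (by linarith) (le_of_lt hba)
    have h := cheb_mono m (by linarith) harg
    have : γ * g ≤ c i := by
      rw [hcdef]
      exact mul_le_mul_of_nonneg_left (le_trans h (le_refl _)) (le_of_lt hγ0)
    have hγg : γ * g = 1 := by rw [hγ]; field_simp
    linarith
  have hchigh : ∀ i, a ≤ μ i → μ i ≤ b → |c i| ≤ γ := by
    intro i hi1 hi2
    have h1 : -1 ≤ 1 - 2/(b-a) * (μ i - a) := by
      rw [← sub_nonneg, show (1 - 2/(b-a) * (μ i - a)) - (-1) = 2*(b - μ i)/(b-a) by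
        field_simp <;> ring]
      exact div_nonneg (by linarith) (le_of_lt hba)
    have h2 : 1 - 2/(b-a) * (μ i - a) ≤ 1 := by
      rw [← sub_nonneg, show 1 - (1 - 2/(b-a) * (μ i - a)) = 2*(μ i - a)/(b-a) by
        field_simp <;> ring]
      exact div_nonneg (by linarith) (le_of_lt hba)
    have := cheb_abs_le (m:ℤ) h1 h2
    rw [hcdef]
    calc |γ * (Chebyshev.T ℝ (m:ℤ)).eval (1 - 2/(b-a) * (μ i - a))|
        = γ * |(Chebyshev.T ℝ (m:ℤ)).eval (1 - 2/(b-a) * (μ i - a))| := by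
          rw [abs_mul, abs_of_pos hγ0]
      _ ≤ γ * 1 := mul_le_mul_of_nonneg_left this (le_of_lt hγ0)
      _ = γ := mul_one γ
  -- membership of eigenvectors
  have hlowY : ∀ i, μ i ≤ a - Δ → e i ∈ Y := by
    intro i hi
    rw [hY]
    exact Submodule.mem_iSup_of_mem (μ i) (Submodule.mem_iSup_of_mem hi (hev i).1)
  have hhighY : ∀ i, a ≤ μ i → e i ∈ Yᗮ := by
    intro i hi
    have hYle : Y ≤ (Submodule.span ℂ {e i})ᗮ := by
      rw [hY]
      apply iSup₂_le
      intro x hx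
      intro v hv
      rw [Submodule.mem_orthogonal]
      intro u hu
      rw [Submodule.mem_span_singleton] at hu
      obtain ⟨k, rfl⟩ := hu
      rw [inner_smul_left]
      have hne : ((μ i : ℝ) : ℂ) ≠ ((x : ℝ) : ℂ) := by
        have : x ≠ μ i := by intro h; rw [h] at hx; linarith
        exact_mod_cast fun h => this (by exact_mod_cast h.symm)
      have horth : (inner ℂ (e i) v : ℂ) = 0 :=
        hsym.orthogonalFamily_eigenspaces hne ⟨e i, (hev i).1⟩ ⟨v, hv⟩
      rw [horth, mul_zero]
    have : e i ∈ ((Submodule.span ℂ {e i})ᗮ)ᗮ := by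
      apply Submodule.le_orthogonal_orthogonal (Submodule.span ℂ {e i})
      exact Submodule.mem_span_singleton_self (e i)
    exact (Submodule.orthogonal_le hYle) this
  -- coordinates of A x
  have hAx : ∀ x : H, A x = ∑ j, (((c j : ℝ) : ℂ) * e.repr x j) • e j := by
    intro x
    conv_lhs => rw [← e.sum_repr x]
    rw [map_sum]
    refine Finset.sum_congr rfl fun j _ => ?_
    rw [LinearMap.map_smul, hAe j, smul_smul, mul_comm]
  have hrepr : ∀ (x : H) (i : Fin n), e.repr (A x) i = ((c i : ℝ) : ℂ) * e.repr x i := by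
    intro x i
    simp only [OrthonormalBasis.repr_apply_apply]
    rw [hAx x, inner_sum]
    simp only [inner_smul_right]
    rw [Finset.sum_eq_single i]
    · have h1 : (inner ℂ (e i) (e i) : ℂ) = 1 := by
        simpa using orthonormal_iff_ite.mp e.orthonormal i i
      rw [h1, mul_one, OrthonormalBasis.repr_apply_apply]
    · intro j _ hj
      have h0 : (inner ℂ (e i) (e j) : ℂ) = 0 := by
        simpa [Ne.symm hj] using orthonormal_iff_ite.mp e.orthonormal i j
      rw [h0, mul_zero]
    · intro hi; exact absurd (Finset.mem_univ i) hi
  -- norms via coordinates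
  have hnorm : ∀ y : H, ‖y‖^2 = ∑ i, ‖e.repr y i‖^2 := by
    intro y
    rw [← e.repr.norm_map y, EuclideanSpace.norm_eq, Real.sq_sqrt (by positivity)]
  -- vanishing coordinates
  have hcoordY : ∀ y ∈ Y, ∀ i, a ≤ μ i → e.repr y i = 0 := by
    intro y hy i hi
    rw [OrthonormalBasis.repr_apply_apply]
    have h0 : (inner ℂ y (e i) : ℂ) = 0 :=
      (Submodule.mem_orthogonal Y (e i)).mp (hhighY i hi) y hy
    rw [← inner_conj_symm, h0, map_zero]
  have hcoordYp : ∀ x ∈ Yᗮ, ∀ i, μ i ≤ a - Δ → e.repr x i = 0 := by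
    intro x hx i hi
    rw [OrthonormalBasis.repr_apply_apply]
    exact Submodule.inner_right_of_mem_orthogonal (hlowY i hi) hx
  -- invariance
  have hAY : ∀ y ∈ Y, A y ∈ Y := by
    intro y hy
    rw [hAx y]
    apply Submodule.sum_mem
    intro j _
    rcases hloc j with hj | hj
    · exact Submodule.smul_mem _ _ (hlowY j hj)
    · rw [hcoordY y hy j hj.1, mul_zero, zero_smul]
      exact Submodule.zero_mem _
  have hAYp : ∀ x ∈ Yᗮ, A x ∈ Yᗮ := by
    intro x hx
    rw [hAx x]
    apply Submodule.sum_mem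
    intro j _
    rcases hloc j with hj | hj
    · rw [hcoordYp x hx j hj, mul_zero, zero_smul]
      exact Submodule.zero_mem _
    · exact Submodule.smul_mem _ _ (hhighY j hj.1)
  refine ⟨?_, ?_, ?_⟩
  · -- commutation
    apply LinearMap.ext
    intro x
    simp only [LinearMap.comp_apply, Submodule.subtype_apply, ContinuousLinearMap.coe_coe]
    have hdec : x = (Y.orthogonalProjectionOnto x : H) + (x - Y.orthogonalProjectionOnto x) := by abel
    have hmem1 : (Y.orthogonalProjectionOnto x : H) ∈ Y := Submodule.coe_mem _
    have hmem2 : x - (Y.orthogonalProjectionOnto x : H) ∈ Yᗮ :=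
      Submodule.sub_starProjection_mem_orthogonal x
    have hAP : A (Y.orthogonalProjectionOnto x : H) ∈ Y := hAY _ hmem1
    have hAQ : A (x - (Y.orthogonalProjectionOnto x : H)) ∈ Yᗮ := hAYp _ hmem2
    conv_rhs => rw [hdec]
    rw [map_add, map_add, Submodule.coe_add,
      Submodule.orthogonalProjectionOnto_apply_of_mem_orthogonal hAQ,
      show ((Y.orthogonalProjectionOnto (A (Y.orthogonalProjectionOnto x : H)) : H)
        = A (Y.orthogonalProjectionOnto x : H)) from Submodule.starProjection_eq_self_iff.mpr hAP]
    simp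
  · -- lower bound on Y
    intro y hy
    have h1 : (inner ℂ y (A y) : ℂ) = ∑ i, (starRingEnd ℂ) (e.repr y i) * (((c i : ℝ):ℂ) * e.repr y i) := by
      rw [← e.repr.inner_map_map y (A y), PiLp.inner_apply]
      refine Finset.sum_congr rfl fun i _ => ?_
      rw [hrepr y i]
      rw [RCLike.inner_apply]; ring
    rw [h1]
    rw [Complex.re_sum]
    rw [hnorm y]
    apply Finset.sum_le_sum
    intro i _
    have hterm : ((starRingEnd ℂ) (e.repr y i) * (((c i : ℝ):ℂ) * e.repr y i)).re
        = c i * ‖e.repr y i‖^2 := by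
      rw [show (starRingEnd ℂ) (e.repr y i) * (((c i : ℝ):ℂ) * e.repr y i)
          = ((c i : ℝ):ℂ) * (e.repr y i * (starRingEnd ℂ) (e.repr y i)) by ring]
      rw [Complex.mul_conj', ← Complex.ofReal_pow, ← Complex.ofReal_mul, Complex.ofReal_re]
    rw [hterm]
    rcases hloc i with hi | hi
    · have := hclow i hi
      nlinarith [sq_nonneg ‖e.repr y i‖]
    · rw [hcoordY y hy i hi.1]
      simp
  · -- norm bound on Yᗮ
    refine ⟨γ^2, ?_, ?_⟩
    · have hlb := cheb_lb m (le_of_lt hδ'0) (by linarith)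
      have hexp0 : 0 < Real.exp (m * Real.sqrt (2*Δ/(b-a))) := Real.exp_pos _
      have hγle : γ ≤ 2 * Real.exp (-(m * Real.sqrt (2*Δ/(b-a)))) := by
        rw [hγ, Real.exp_neg]
        rw [show (2:ℝ) * (Real.exp (m * Real.sqrt (2*Δ/(b-a))))⁻¹
            = (Real.exp (m * Real.sqrt (2*Δ/(b-a))) / 2)⁻¹ by
              rw [inv_div]
              exact (div_eq_mul_inv _ _).symm]
        apply inv_anti₀ (by positivity)
        exact hlb
      nlinarith [mul_le_mul_of_nonneg_right hγ1 (le_of_lt hγ0)]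
    · intro x hx
      have hsq : ‖A x‖^2 ≤ (γ * ‖x‖)^2 := by
        rw [hnorm (A x), mul_pow, hnorm x, Finset.mul_sum]
        apply Finset.sum_le_sum
        intro i _
        rw [hrepr x i]
        rcases hloc i with hi | hi
        · rw [hcoordYp x hx i hi]
          simp
        · have hci := hchigh i hi.1 hi.2
          rw [norm_mul]
          have hn1 : ‖((c i : ℝ):ℂ)‖ = |c i| := by
            rw [Complex.norm_real]; rfl
          rw [hn1, mul_pow]
          apply mul_le_mul_of_nonneg_right _ (sq_nonneg _)
          have : |c i|^2 ≤ γ^2 := by nlinarith [abs_nonneg (c i)]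
          exact this
      have h := Real.sqrt_le_sqrt hsq
      rw [Real.sqrt_sq (norm_nonneg _), Real.sqrt_sq (by positivity)] at h
      rw [Real.sqrt_sq (le_of_lt hγ0)]
      exact h
end

section
/- The Chebyshev polynomials of the first kind satisfy T_m(1+δ) ≥ (1/2)·e^{m√δ} for all δ ∈ [0, 1/4] and all m ≥ 0. -/
/-!
For `x ≥ 1`, `T_n(x) = cosh (n · arcosh x) ≥ exp (n · arcosh x) / 2`, so it suffices that
`√δ ≤ arcosh (1 + δ)`, i.e. `cosh √δ ≤ 1 + δ`. This follows from
`cosh t ≤ exp (t² / 2) ≤ 1 / (1 - t² / 2) ≤ 1 + t²` for `t² ≤ 1`.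
-/

open Real Polynomial.Chebyshev

theorem Real.exp_div_two_le_cosh (x : ℝ) : exp x / 2 ≤ cosh x := by
  rw [cosh_eq]
  linarith [exp_pos (-x)]

theorem Polynomial.Chebyshev.T_real_eval_eq_cosh_arcosh {x : ℝ} (hx : 1 ≤ x) (n : ℤ) :
    (T ℝ n).eval x = cosh (n * arcosh x) := by
  rw [← T_real_cosh, cosh_arcosh hx]

theorem Polynomial.Chebyshev.exp_mul_arcosh_le_two_mul_T_real_eval {x : ℝ} (hx : 1 ≤ x) (n : ℤ) :
    exp (n * arcosh x) ≤ 2 * (T ℝ n).eval x := by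
  rw [T_real_eval_eq_cosh_arcosh hx]
  linarith [exp_div_two_le_cosh (n * arcosh x)]

theorem Real.cosh_le_one_add_sq {t : ℝ} (ht : |t| ≤ 1) : cosh t ≤ 1 + t ^ 2 := by
  have ht2 : t ^ 2 ≤ 1 := by nlinarith [sq_abs t, abs_nonneg t]
  have hexp : exp (t ^ 2 / 2) ≤ 1 / (1 - t ^ 2 / 2) :=
    exp_bound_div_one_sub_of_interval (by positivity) (by linarith)
  have hrat : 1 / (1 - t ^ 2 / 2) ≤ 1 + t ^ 2 := by
    rw [div_le_iff₀ (by linarith)]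
    nlinarith [sq_nonneg t]
  exact (cosh_le_exp_half_sq t).trans (hexp.trans hrat)

theorem Real.sqrt_le_arcosh_one_add {δ : ℝ} (h0 : 0 ≤ δ) (h1 : δ ≤ 1) :
    √δ ≤ arcosh (1 + δ) := by
  have hx : (1 : ℝ) ≤ 1 + δ := by linarith
  have hcosh : cosh √δ ≤ cosh (arcosh (1 + δ)) := by
    rw [cosh_arcosh hx]
    calc cosh √δ ≤ 1 + √δ ^ 2 :=
          cosh_le_one_add_sq (by rw [abs_of_nonneg (sqrt_nonneg δ)]; exact sqrt_le_one.mpr h1)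
      _ = 1 + δ := by rw [sq_sqrt h0]
  rw [cosh_le_cosh, abs_of_nonneg (sqrt_nonneg δ), abs_of_nonneg (arcosh_nonneg hx)] at hcosh
  exact hcosh

theorem stmt6 (m : ℕ) (δ : ℝ) (h0 : 0 ≤ δ) (h1 : δ ≤ 1 / 4) :
    (1 / 2) * Real.exp (m * Real.sqrt δ) ≤ (Polynomial.Chebyshev.T ℝ (m : ℤ)).eval (1 + δ) := by
  have harcosh : m * √δ ≤ m * arcosh (1 + δ) :=
    mul_le_mul_of_nonneg_left (sqrt_le_arcosh_one_add h0 (by linarith)) m.cast_nonneg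
  have hT := exp_mul_arcosh_le_two_mul_T_real_eval (x := 1 + δ) (by linarith) m
  rw [Int.cast_natCast] at hT
  linarith [exp_le_exp.mpr harcosh]
end

section
/- Let I be a finite index set, m ∈ ℕ, and M ⊆ {h ∈ ℕ_0^I : Σ_i h(i) ≤ m} a set of histograms. Fix any h ∈ M. For an indexed collection of operators H = (H_{i,t})_{i ∈ I, t ∈ [m]} on a fixed finite-dimensional vector space and a word i⃗ = (i_1, …, i_k), write H(i⃗) = H_{i_1,1}⋯H_{i_k,k}; for a set M' of histograms write H[M'] = Σ_{words i⃗ with histogram in M'} H(i⃗). For ω ∈ {0,…,m}^I let H_ω denote the weighted collection (2^{ω_i} H_{i,t}). Then H[{h}] lies in the linear span of { H_ω[M] : ω ∈ {0,…,m}^I }. -/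
/-! Expanding the weights, `H_ω[M] = Σ_{g ∈ M} (Π_i (2^{ω_i})^{g_i}) • H[{g}]`, so it suffices
to find coefficients `a_ω` with `Σ_ω a_ω Π_i (2^{g_i})^{ω_i} = δ_{g,h}` for every histogram `g`
with entries at most `m`. Such coefficients come as a tensor product: for each `i` take the
coefficients of the Lagrange basis polynomial of degree `≤ m` that is `1` at `2^{h_i}` and `0` at
the other nodes `2^0, …, 2^m`. -/

variable {I : Type*} [Fintype I] [DecidableEq I] {A : Type*} [Ring A] [Algebra ℂ A]

/-- The histogram of the word `f : Fin k → I`. -/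
def hist {k : ℕ} (f : Fin k → I) : I → ℕ :=
  fun i => (Finset.univ.filter fun t => f t = i).card

/-- `H[M] = Σ_{words i⃗ with histogram in M} H_{i_1,1} ⋯ H_{i_k,k}`, summed over all
words of length at most `m`. -/
noncomputable def wordSum (Op : I → ℕ → A) (m : ℕ) (M : Finset (I → ℕ)) : A :=
  ∑ k ∈ Finset.range (m + 1), ∑ f : Fin k → I,
    if hist f ∈ M then (List.ofFn fun t : Fin k => Op (f t) (t : ℕ)).prod else 0

open Finset

theorem List.prod_ofFn_smul {R B : Type*} [Monoid R] [Monoid B] [MulAction R B]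
    [IsScalarTower R B B] [SMulCommClass R B B] {k : ℕ} (c : Fin k → R) (a : Fin k → B) :
    (List.ofFn fun t => c t • a t).prod = (List.ofFn c).prod • (List.ofFn a).prod := by
  induction k with
  | zero => simp
  | succ n ih =>
    simp only [List.ofFn_succ, List.prod_cons, ih, smul_mul_smul_comm]

theorem prod_comp_eq_prod_pow_hist {M : Type*} [CommMonoid M] {k : ℕ} (f : Fin k → I)
    (x : I → M) : ∏ t, x (f t) = ∏ i, x i ^ hist f i := by
  rw [← prod_fiberwise univ f (fun t => x (f t))]
  refine prod_congr rfl fun i _ => ?_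
  rw [prod_congr rfl fun t ht => by rw [(mem_filter.mp ht).2], prod_const, hist]

section WordSum

variable {R B : Type*} [CommSemiring R] [Ring B] [Algebra R B]

theorem wordSum_smul (Op : I → ℕ → B) (m : ℕ) (M : Finset (I → ℕ)) (c : I → R) :
    wordSum (fun i t => c i • Op i t) m M = ∑ g ∈ M, (∏ i, c i ^ g i) • wordSum Op m {g} := by
  simp only [wordSum, smul_sum]
  rw [sum_comm]
  refine sum_congr rfl fun k _ => ?_
  rw [sum_comm]
  refine sum_congr rfl fun f _ => ?_
  rw [List.prod_ofFn_smul (fun t => c (f t)), List.prod_ofFn, prod_comp_eq_prod_pow_hist]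
  simp only [mem_singleton, smul_ite, smul_zero, sum_ite_eq]

theorem sum_smul_wordSum_smul_eq_wordSum_singleton {Ω : Type*} [Fintype Ω]
    (Op : I → ℕ → B) (m : ℕ) {M : Finset (I → ℕ)} {h : I → ℕ} (hh : h ∈ M)
    (a : Ω → R) (c : Ω → I → R)
    (ha : ∀ g ∈ M, ∑ ω, a ω * ∏ i, c ω i ^ g i = if g = h then 1 else 0) :
    ∑ ω, a ω • wordSum (fun i t => c ω i • Op i t) m M = wordSum Op m {h} := by
  simp only [wordSum_smul, smul_sum, smul_smul]
  rw [sum_comm]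
  calc ∑ g ∈ M, ∑ ω, (a ω * ∏ i, c ω i ^ g i) • wordSum Op m {g}
      = ∑ g ∈ M, (if g = h then (1 : R) else 0) • wordSum Op m {g} :=
        sum_congr rfl fun g hg => by rw [← sum_smul, ha g hg]
    _ = wordSum Op m {h} := by simp [hh]

end WordSum

section Interpolation

variable {F : Type*} [Field F] {v : ℕ → F} {m : ℕ}

theorem exists_sum_mul_pow_eq_ite (hv : Set.InjOn v (range (m + 1))) {j : ℕ} (hj : j ≤ m) :
    ∃ c : Fin (m + 1) → F, ∀ k ≤ m, ∑ n, c n * v k ^ (n : ℕ) = if k = j then 1 else 0 := by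
  have hmem : ∀ {k}, k ≤ m → k ∈ range (m + 1) := fun hk => mem_range.mpr (Nat.lt_succ_of_le hk)
  set P := Lagrange.basis (range (m + 1)) v j
  have hdeg : P.natDegree < m + 1 := by
    rw [Lagrange.natDegree_basis hv (hmem hj), card_range]
    omega
  refine ⟨fun n => P.coeff n, fun k hk => ?_⟩
  rw [Fin.sum_univ_eq_sum_range (fun n => P.coeff n * v k ^ n), ← Polynomial.eval_eq_sum_range' hdeg]
  split_ifs with hkj
  · exact hkj ▸ Lagrange.eval_basis_self hv (hmem hj)
  · exact Lagrange.eval_basis_of_ne (Ne.symm hkj) (hmem hk)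

theorem exists_sum_prod_pow_eq_ite (hv : Set.InjOn v (range (m + 1))) {h : I → ℕ}
    (hh : ∀ i, h i ≤ m) :
    ∃ a : (I → Fin (m + 1)) → F, ∀ g : I → ℕ, (∀ i, g i ≤ m) →
      ∑ ω, a ω * ∏ i, v (g i) ^ (ω i : ℕ) = if g = h then 1 else 0 := by
  choose c hc using fun i => exists_sum_mul_pow_eq_ite hv (hh i)
  refine ⟨fun ω => ∏ i, c i (ω i), fun g hg => ?_⟩
  calc ∑ ω : I → Fin (m + 1), (∏ i, c i (ω i)) * ∏ i, v (g i) ^ (ω i : ℕ)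
      = ∏ i, ∑ n, c i n * v (g i) ^ (n : ℕ) := by
        simp only [Fintype.prod_sum, prod_mul_distrib]
    _ = ∏ i, if g i = h i then 1 else 0 := prod_congr rfl fun i _ => hc i (g i) (hg i)
    _ = if g = h then 1 else 0 := by simp only [prod_boole, mem_univ, true_imp_iff, funext_iff]

end Interpolation

theorem stmt8 (Op : I → ℕ → A) (m : ℕ) (M : Finset (I → ℕ))
    (hM : ∀ g ∈ M, ∑ i, g i ≤ m) (h : I → ℕ) (hh : h ∈ M) :
    wordSum Op m {h} ∈ Submodule.span ℂ
      {x : A | ∃ ω : I → Fin (m + 1),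
        x = wordSum (fun i t => ((2 : ℂ) ^ (ω i : ℕ)) • Op i t) m M} := by
  have hle : ∀ g ∈ M, ∀ i, g i ≤ m := fun g hg i =>
    (single_le_sum (fun j _ => Nat.zero_le (g j)) (mem_univ i)).trans (hM g hg)
  have hinj : Set.InjOn (fun n : ℕ => (2 : ℂ) ^ n) (range (m + 1)) := fun a _ b _ hab =>
    Nat.pow_right_injective le_rfl (Nat.cast_injective (R := ℂ) (by push_cast; exact hab))
  obtain ⟨a, ha⟩ := exists_sum_prod_pow_eq_ite hinj (hle h hh)
  rw [← sum_smul_wordSum_smul_eq_wordSum_singleton Op m hh a (fun ω i => (2 : ℂ) ^ (ω i : ℕ))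
    fun g hg => by simpa only [pow_right_comm] using ha g (hle g hg)]
  exact Submodule.sum_mem _ fun ω _ => Submodule.smul_mem _ _ (Submodule.subset_span ⟨ω, rfl⟩)
end

section
/- Let f_k(x) = Σ_{j=1}^{k} (1/j)(1−e^{−x})^j for k > 2. Then for all x ≥ 0: (i) f_k(x) ≤ min{x, 1 + log k}; and (ii) f_k(x) ≥ min{x, 1} − 2^{−0.66 k}. -/
/-! With `t = 1 - e^{-x} ∈ [0, 1)`, `f_k(x)` is the `k`-th partial sum of `-log (1 - t) = x`.
The terms are nonnegative, so `f_k(x) ≤ x`, and they are at most `1/j`, so `f_k(x)` is bounded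
by the harmonic number `H_k ≤ 1 + log k`. The tail after `k` terms is dominated by a geometric
series, giving `x - f_k(x) ≤ e^x t^{k+1}/(k+1)`; on `[0, 1]` this is at most `(1 - e^{-1})^k`,
and for `x ≥ 1` monotonicity of `f_k` reduces to `x = 1`. Finally `1 - e^{-1} ≤ 2^{-0.66}`. -/

noncomputable def fk (k : ℕ) (x : ℝ) : ℝ :=
  ∑ j ∈ Finset.Icc 1 k, (1 / (j : ℝ)) * (1 - Real.exp (-x)) ^ j

open Real Finset

lemma fk_eq_sum_range (k : ℕ) (x : ℝ) :
    fk k x = ∑ n ∈ range k, (1 - exp (-x)) ^ (n + 1) / (n + 1) := by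
  rw [fk, ← Ico_add_one_right_eq_Icc, sum_Ico_eq_sum_range]
  simp [div_eq_mul_inv, mul_comm, add_comm]

lemma one_sub_exp_neg_nonneg {x : ℝ} (hx : 0 ≤ x) : 0 ≤ 1 - exp (-x) := by
  linarith [exp_le_one_iff.mpr (neg_nonpos.mpr hx)]

lemma hasSum_one_sub_exp_neg_pow_div {x : ℝ} (hx : -log 2 < x) :
    HasSum (fun n : ℕ => (1 - exp (-x)) ^ (n + 1) / (n + 1)) x := by
  have hlt : exp (-x) < 2 := by
    simpa [exp_log] using exp_lt_exp.mpr (neg_lt.mp hx)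
  have habs : |1 - exp (-x)| < 1 := abs_lt.mpr ⟨by linarith, by linarith [exp_pos (-x)]⟩
  simpa using hasSum_pow_div_log_of_abs_lt_one habs

lemma fk_le_self (k : ℕ) {x : ℝ} (hx : 0 ≤ x) : fk k x ≤ x := by
  rw [fk_eq_sum_range]
  exact sum_le_hasSum _ (fun n _ => div_nonneg (pow_nonneg (one_sub_exp_neg_nonneg hx) _)
    n.cast_add_one_pos.le) (hasSum_one_sub_exp_neg_pow_div (by linarith [log_pos one_lt_two]))

lemma fk_le_one_add_log (k : ℕ) {x : ℝ} (hx : 0 ≤ x) : fk k x ≤ 1 + log k :=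
  calc fk k x ≤ ∑ j ∈ Icc 1 k, (j : ℝ)⁻¹ := by
        refine sum_le_sum fun j _ => ?_
        rw [one_div]
        refine mul_le_of_le_one_right (by positivity) (pow_le_one₀ (one_sub_exp_neg_nonneg hx) ?_)
        linarith [exp_pos (-x)]
    _ = harmonic k := by simp [harmonic_eq_sum_Icc]
    _ ≤ 1 + log k := harmonic_le_one_add_log k

lemma fk_monotoneOn (k : ℕ) : MonotoneOn (fk k) (Set.Ici 0) := by
  intro x hx y _ hxy
  simp only [fk_eq_sum_range]
  gcongr
  exact one_sub_exp_neg_nonneg hx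

lemma self_sub_fk_le (k : ℕ) {x : ℝ} (hx : 0 ≤ x) :
    x - fk k x ≤ exp x * (1 - exp (-x)) ^ (k + 1) / (k + 1) := by
  set t := 1 - exp (-x)
  have ht0 : 0 ≤ t := one_sub_exp_neg_nonneg hx
  have ht1 : t < 1 := by linarith [exp_pos (-x)]
  have htail : HasSum (fun n : ℕ => t ^ (n + k + 1) / ((↑(n + k) : ℝ) + 1)) (x - fk k x) := by
    rw [fk_eq_sum_range]
    exact (hasSum_nat_add_iff' k).mpr
      (hasSum_one_sub_exp_neg_pow_div (by linarith [log_pos one_lt_two]))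
  have hgeom : HasSum (fun n : ℕ => t ^ (k + 1) / (k + 1) * t ^ n)
      (t ^ (k + 1) / (k + 1) * (1 - t)⁻¹) :=
    (hasSum_geometric_of_lt_one ht0 ht1).mul_left _
  have hinv : (1 - t)⁻¹ = exp x := by simp [t, exp_neg]
  calc x - fk k x ≤ t ^ (k + 1) / (k + 1) * (1 - t)⁻¹ := by
        refine hasSum_le (fun n => ?_) htail hgeom
        rw [div_mul_eq_mul_div, ← pow_add, show k + 1 + n = n + k + 1 by ring]
        gcongr
        simp
    _ = exp x * t ^ (k + 1) / (k + 1) := by rw [hinv]; ring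

lemma self_sub_fk_le_of_le_one {k : ℕ} (hk : 1 ≤ k) {x : ℝ} (hx : 0 ≤ x) (hx1 : x ≤ 1) :
    x - fk k x ≤ (1 - exp (-1)) ^ k := by
  have hs0 : 0 ≤ 1 - exp (-1) := one_sub_exp_neg_nonneg zero_le_one
  have ht0 : 0 ≤ 1 - exp (-x) := one_sub_exp_neg_nonneg hx
  have hts : 1 - exp (-x) ≤ 1 - exp (-1) := by gcongr
  -- `e (1 - e⁻¹) = e - 1 ≤ k + 1`
  have hcoef : exp 1 * (1 - exp (-1)) ≤ k + 1 := by
    rw [mul_sub, mul_one, ← exp_add, add_neg_cancel, exp_zero]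
    have : (1 : ℝ) ≤ k := by exact_mod_cast hk
    linarith [exp_one_lt_d9]
  calc x - fk k x ≤ exp x * (1 - exp (-x)) ^ (k + 1) / (k + 1) := self_sub_fk_le k hx
    _ ≤ exp 1 * (1 - exp (-1)) ^ (k + 1) / (k + 1) := by gcongr
    _ = (1 - exp (-1)) ^ k * (exp 1 * (1 - exp (-1)) / (k + 1)) := by ring
    _ ≤ (1 - exp (-1)) ^ k := by
        refine mul_le_of_le_one_right (pow_nonneg hs0 k) ?_
        exact (div_le_one (by positivity)).mpr hcoef

lemma min_self_one_sub_le_fk {k : ℕ} (hk : 1 ≤ k) {x : ℝ} (hx : 0 ≤ x) :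
    min x 1 - (1 - exp (-1)) ^ k ≤ fk k x := by
  rcases le_total x 1 with hx1 | hx1
  · rw [min_eq_left hx1]
    linarith [self_sub_fk_le_of_le_one hk hx hx1]
  · rw [min_eq_right hx1]
    have hmono := fk_monotoneOn k (Set.mem_Ici.mpr zero_le_one) (Set.mem_Ici.mpr hx) hx1
    linarith [self_sub_fk_le_of_le_one hk zero_le_one le_rfl]

lemma one_sub_exp_neg_one_le : 1 - exp (-1) ≤ (2 : ℝ) ^ (-(0.66 : ℝ)) := by
  have hs : 1 - exp (-1) ≤ (0.63213 : ℝ) := by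
    have : (0.36787 : ℝ) ≤ exp (-1) := by
      rw [exp_neg, le_inv_comm₀ (by norm_num) (exp_pos 1)]
      linarith [exp_one_lt_d9]
    linarith
  -- compare 50th powers: `0.63213 ^ 50 ≤ 2 ^ (-33)`
  refine hs.trans ((pow_le_pow_iff_left₀ (by norm_num) (by positivity) (n := 50) (by norm_num)).mp ?_)
  rw [← rpow_natCast ((2 : ℝ) ^ _), ← rpow_mul (by norm_num), show -(0.66 : ℝ) * (50 : ℕ) = -(33 : ℕ) by norm_num,
    rpow_neg (by norm_num), rpow_natCast, le_inv_comm₀ (by positivity) (by positivity)]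
  norm_num

theorem stmt10 (k : ℕ) (hk : 2 < k) (x : ℝ) (hx : 0 ≤ x) :
    fk k x ≤ min x (1 + Real.log k) ∧
      min x 1 - (2 : ℝ) ^ (-(0.66 : ℝ) * k) ≤ fk k x := by
  refine ⟨le_min (fk_le_self k hx) (fk_le_one_add_log k hx), ?_⟩
  have hpow : (1 - exp (-1)) ^ k ≤ (2 : ℝ) ^ (-(0.66 : ℝ) * k) := by
    rw [rpow_mul (by norm_num), rpow_natCast]
    exact pow_le_pow_left₀ (one_sub_exp_neg_nonneg zero_le_one) one_sub_exp_neg_one_le k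
  linarith [min_self_one_sub_le_fk (by omega : 1 ≤ k) hx]
end

section
/- Let Z ⊆ H be a subspace, Ỹ ⊆ H a subspace that is (1−δ)-majorizing for Z, and A an isotropic σ-approximate projector for Z. Then the subspace A·Ỹ is (1−δ')-majorizing for Z, where δ' = δ / (μ/σ + δ) with μ = 1−δ. Equivalently, A·Ỹ is μ'-majorizing with μ' ≥ μ/(μ + σδ). -/
/- STATEMENT 13: applying an isotropic σ-approximate projector `A` to a `(1−δ)`-majorizing
subspace `Ỹ` yields a subspace `A·Ỹ` that is `μ/(μ + σδ)`-majorizing for `Z`, `μ = 1−δ`. -/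

variable {H : Type*} [NormedAddCommGroup H] [InnerProductSpace ℂ H] [FiniteDimensional ℂ H]

/-- For `v ∈ K`, the inner product of `v` with `x` equals that with the projection of `x`. -/
private lemma inner_proj_of_mem (K : Submodule ℂ H) {v : H} (x : H) (hv : v ∈ K) :
    (inner ℂ v ((Submodule.orthogonalProjectionOnto K x : K) : H) : ℂ) = inner ℂ v x := by
  have hmem : x - ((Submodule.orthogonalProjectionOnto K x : K) : H) ∈ Kᗮ :=
    Submodule.sub_starProjection_mem_orthogonal (K := K) x
  have h0 : (inner ℂ v (x - ((Submodule.orthogonalProjectionOnto K x : K) : H)) : ℂ) = 0 :=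
    (Submodule.mem_orthogonal K _).mp hmem v hv
  rw [inner_sub_right] at h0
  linear_combination -h0

private lemma real_aux1 {δ a m c : ℝ} (hδ1 : δ < 1)
    (h1 : (1 - δ) * a ^ 2 ≤ m) (h2 : m ≤ a) (h3 : m = 1 + c) (hc : 0 ≤ c) :
    (1 - δ) * c ≤ δ := by
  have hμ : (0:ℝ) < 1 - δ := by linarith
  have hm1 : (1:ℝ) ≤ m := by linarith
  have ha : (0:ℝ) < a := by linarith
  have hμa : (1 - δ) * a ≤ 1 := by nlinarith
  nlinarith

private lemma real_aux2 {δ σ lam wn c s : ℝ} (hδ0 : 0 ≤ δ) (hδ1 : δ < 1)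
    (hσ : 0 ≤ σ) (hlam : 0 < lam) (hw : wn ≤ σ * lam * c)
    (hc : (1 - δ) * c ≤ δ) (hcs : lam ≤ (lam + wn) * s)
    (hs : 0 ≤ s) (hc0 : 0 ≤ c) :
    (1 - δ) ≤ ((1 - δ) + σ * δ) * s := by
  have hμ : (0:ℝ) < 1 - δ := by linarith
  have hwn0 : 0 ≤ σ * lam * c := by positivity
  have key : lam * (1 - δ) ≤ lam * (((1 - δ) + σ * δ) * s) := by
    nlinarith [mul_le_mul_of_nonneg_right hw hs,
      mul_le_mul_of_nonneg_right hc (by positivity : (0:ℝ) ≤ σ * lam * s)]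
  exact le_of_mul_le_mul_left key hlam

theorem stmt13 (Z Yt : Submodule ℂ H) (δ σ lam : ℝ)
    (hδ0 : 0 ≤ δ) (hδ1 : δ < 1) (hσ : 0 ≤ σ) (hlam : 0 < lam)
    (A : H →L[ℂ] H) (hsa : IsSelfAdjoint A)
    -- `A` is an isotropic σ-approximate projector for `Z`
    (hAZ : ∀ z ∈ Z, A z = ((Real.sqrt lam : ℝ) : ℂ) • z)
    (hAZp : ∀ x ∈ Zᗮ, ‖A x‖ ≤ Real.sqrt (σ * lam) * ‖x‖)
    -- `Ỹ` is `(1−δ)`-majorizing for `Z`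
    (hmaj : ∀ ψ ∈ Z, ‖ψ‖ = 1 →
      1 - δ ≤ ‖((Submodule.orthogonalProjectionOnto Yt ψ : Yt) : H)‖ ^ 2) :
    -- `A·Ỹ` is `(1−δ)/((1−δ)+σδ)`-majorizing for `Z`
    ∀ ψ ∈ Z, ‖ψ‖ = 1 →
      (1 - δ) / ((1 - δ) + σ * δ) ≤
        ‖((Submodule.orthogonalProjectionOnto (Submodule.map (A : H →ₗ[ℂ] H) Yt) ψ :
            Submodule.map (A : H →ₗ[ℂ] H) Yt) : H)‖ ^ 2 := by
  intro ψ hψZ hψn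
  have hμ : (0:ℝ) < 1 - δ := by linarith
  have hsym := ContinuousLinearMap.isSelfAdjoint_iff_isSymmetric.mp hsa
  -- scaled majorization
  have hmaj' : ∀ ζ ∈ Z, (1 - δ) * ‖ζ‖ ^ 2 ≤
      ‖((Submodule.orthogonalProjectionOnto Yt ζ : Yt) : H)‖ ^ 2 := by
    intro ζ hζ
    rcases eq_or_ne ζ 0 with rfl | hne
    · simp
    · have hc : (0:ℝ) < ‖ζ‖ := norm_pos_iff.mpr hne
      have h1 : ‖((‖ζ‖⁻¹ : ℝ) : ℂ) • ζ‖ = 1 := by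
        rw [norm_smul]
        simp [abs_of_pos (inv_pos.mpr hc), inv_mul_cancel₀ hc.ne']
      have h2 := hmaj (((‖ζ‖⁻¹ : ℝ) : ℂ) • ζ) (Z.smul_mem _ hζ) h1
      rw [map_smul] at h2
      have h3 : ‖((((‖ζ‖⁻¹ : ℝ) : ℂ) • Submodule.orthogonalProjectionOnto Yt ζ : Yt) : H)‖
          = ‖ζ‖⁻¹ * ‖((Submodule.orthogonalProjectionOnto Yt ζ : Yt) : H)‖ := by
        rw [Submodule.coe_smul, norm_smul]
        simp [abs_of_pos (inv_pos.mpr hc)]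
      rw [h3] at h2
      have h4 := mul_le_mul_of_nonneg_right h2
        (le_of_lt (by positivity : (0:ℝ) < ‖ζ‖ ^ 2))
      calc (1 - δ) * ‖ζ‖ ^ 2
          ≤ (‖ζ‖⁻¹ * ‖((Submodule.orthogonalProjectionOnto Yt ζ : Yt) : H)‖) ^ 2 * ‖ζ‖ ^ 2 := h4
        _ = ‖((Submodule.orthogonalProjectionOnto Yt ζ : Yt) : H)‖ ^ 2 := by
            field_simp
  -- the map `L : Z → Z`, `L ζ = P_Z (P_Ỹ ζ)`
  let L : Z →ₗ[ℂ] Z :=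
    { toFun := fun ζ => Submodule.orthogonalProjectionOnto Z ((Submodule.orthogonalProjectionOnto Yt (ζ : H) : Yt) : H)
      map_add' := by intro a b; simp
      map_smul' := by intro c a; simp }
  -- the key inner-product identity: `⟪ζ, L ζ⟫ = ‖P_Ỹ ζ‖²`
  have hLinner : ∀ ζ : Z, (inner ℂ (ζ : H) (((L ζ : Z) : H)) : ℂ)
      = ((‖((Submodule.orthogonalProjectionOnto Yt (ζ : H) : Yt) : H)‖ ^ 2 : ℝ) : ℂ) := by
    intro ζ
    have e2 : (inner ℂ (ζ : H) (((L ζ : Z) : H)) : ℂ)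
        = inner ℂ (ζ : H) ((Submodule.orthogonalProjectionOnto Yt (ζ : H) : Yt) : H) :=
      inner_proj_of_mem Z _ ζ.2
    have hy := Submodule.coe_mem (Submodule.orthogonalProjectionOnto Yt (ζ : H))
    have h0 : (inner ℂ ((ζ : H) - ((Submodule.orthogonalProjectionOnto Yt (ζ : H) : Yt) : H))
        ((Submodule.orthogonalProjectionOnto Yt (ζ : H) : Yt) : H) : ℂ) = 0 :=
      Submodule.starProjection_inner_eq_zero (K := Yt) (ζ : H)
      ((Submodule.orthogonalProjectionOnto Yt (ζ : H) : Yt) : H) hy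
    rw [inner_sub_left] at h0
    have e1 : (inner ℂ (ζ : H) ((Submodule.orthogonalProjectionOnto Yt (ζ : H) : Yt) : H) : ℂ)
        = inner ℂ ((Submodule.orthogonalProjectionOnto Yt (ζ : H) : Yt) : H)
            ((Submodule.orthogonalProjectionOnto Yt (ζ : H) : Yt) : H) := by
      linear_combination h0
    rw [e2, e1, inner_self_eq_norm_sq_to_K]
    norm_cast
  -- `L` is injective, hence surjective
  have hLsurj : Function.Surjective L := by
    rw [← LinearMap.injective_iff_surjective]
    intro a b hab
    suffices h : ∀ ζ : Z, L ζ = 0 → ζ = 0 by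
      have h1 : L (a - b) = 0 := by rw [map_sub, hab, sub_self]
      exact sub_eq_zero.mp (h _ h1)
    intro ζ h0
    have h1 := hLinner ζ
    rw [h0] at h1
    simp only [ZeroMemClass.coe_zero, inner_zero_right] at h1
    have h2 : (‖((Submodule.orthogonalProjectionOnto Yt (ζ : H) : Yt) : H)‖ : ℝ) ^ 2 = 0 := by
      exact_mod_cast h1.symm
    have h3 := hmaj' (ζ : H) ζ.2
    rw [h2] at h3
    have h5 : ‖(ζ : H)‖ = 0 := by
      by_contra hne
      have hp : 0 < ‖(ζ : H)‖ ^ 2 := by positivity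
      linarith [mul_pos hμ hp]
    exact Subtype.ext (norm_eq_zero.mp h5)
  obtain ⟨ζ, hζ⟩ := hLsurj ⟨ψ, hψZ⟩
  set y : H := ((Submodule.orthogonalProjectionOnto Yt (ζ : H) : Yt) : H) with hydef
  have hyYt : y ∈ Yt := Submodule.coe_mem _
  have hPy : ((Submodule.orthogonalProjectionOnto Z y : Z) : H) = ψ := congrArg Subtype.val hζ
  -- ‖y‖² = re ⟪ζ, ψ⟫ ≤ ‖ζ‖
  have hyn : ‖y‖ ^ 2 ≤ ‖(ζ : H)‖ := by
    have h1 : (inner ℂ (ζ : H) (((L ζ : Z) : H)) : ℂ) = inner ℂ (ζ : H) ψ := by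
      rw [hζ]
    have h2 := hLinner ζ
    rw [h1] at h2
    have h3 : ‖y‖ ^ 2 = (inner ℂ (ζ : H) ψ : ℂ).re := by
      rw [h2, Complex.ofReal_re]
    rw [h3]
    calc (inner ℂ (ζ : H) ψ : ℂ).re ≤ ‖(ζ : H)‖ * ‖ψ‖ := re_inner_le_norm (𝕜 := ℂ) _ _
      _ = ‖(ζ : H)‖ := by rw [hψn, mul_one]
  -- u := y - ψ ∈ Zᗮ with  (1-δ) * ‖u‖² ≤ δ
  set u : H := y - ψ with hudef
  have hu : u ∈ Zᗮ := by
    have h1 : y - ((Submodule.orthogonalProjectionOnto Z y : Z) : H) ∈ Zᗮ :=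
      Submodule.sub_starProjection_mem_orthogonal (K := Z) y
    rwa [hPy] at h1
  have hψu : (inner ℂ ψ u : ℂ) = 0 := (Submodule.mem_orthogonal Z u).mp hu ψ hψZ
  have hyψu : y = ψ + u := by rw [hudef]; abel
  have hyu : ‖y‖ ^ 2 = 1 + ‖u‖ ^ 2 := by
    rw [hyψu, norm_add_sq (𝕜 := ℂ), hψn]
    simp [hψu]
  have humu : (1 - δ) * ‖u‖ ^ 2 ≤ δ := by
    have h1 : (1 - δ) * ‖(ζ : H)‖ ^ 2 ≤ ‖y‖ ^ 2 := hmaj' (ζ : H) ζ.2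
    exact real_aux1 hδ1 h1 hyn hyu (sq_nonneg _)
  -- `w := A u` lies in `Zᗮ`
  set w : H := A u with hwdef
  have hwZp : w ∈ Zᗮ := by
    rw [Submodule.mem_orthogonal]
    intro z hz
    have h1 : (inner ℂ (A z) u : ℂ) = inner ℂ z w := hsym z u
    rw [hAZ z hz, inner_smul_left] at h1
    have h2 : (inner ℂ z u : ℂ) = 0 := (Submodule.mem_orthogonal Z u).mp hu z hz
    rw [h2, mul_zero] at h1
    exact h1.symm
  have hwn : ‖w‖ ≤ Real.sqrt (σ * lam) * ‖u‖ := hAZp u hu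
  have hwn2 : ‖w‖ ^ 2 ≤ σ * lam * ‖u‖ ^ 2 := by
    have h1 : ‖w‖ ^ 2 ≤ (Real.sqrt (σ * lam) * ‖u‖) ^ 2 :=
      pow_le_pow_left₀ (norm_nonneg _) hwn 2
    calc ‖w‖ ^ 2 ≤ (Real.sqrt (σ * lam) * ‖u‖) ^ 2 := h1
      _ = σ * lam * ‖u‖ ^ 2 := by
          rw [mul_pow, Real.sq_sqrt (by positivity)]
  -- φ := A y
  set φ : H := A y with hφdef
  have hφeq : φ = ((Real.sqrt lam : ℝ) : ℂ) • ψ + w := by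
    rw [hφdef, hyψu, map_add, hAZ ψ hψZ, hwdef]
  have hφmem : φ ∈ Submodule.map (A : H →ₗ[ℂ] H) Yt :=
    ⟨y, hyYt, rfl⟩
  have hψw : (inner ℂ ψ w : ℂ) = 0 := (Submodule.mem_orthogonal Z w).mp hwZp ψ hψZ
  have hφψ : (inner ℂ φ ψ : ℂ) = ((Real.sqrt lam : ℝ) : ℂ) := by
    rw [hφeq, inner_add_left, inner_smul_left, inner_self_eq_norm_sq_to_K, hψn,
      ← inner_conj_symm, hψw]
    simp
  have hφn : ‖φ‖ ^ 2 = lam + ‖w‖ ^ 2 := by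
    rw [hφeq, norm_add_sq (𝕜 := ℂ)]
    have h1 : (inner ℂ (((Real.sqrt lam : ℝ) : ℂ) • ψ) w : ℂ) = 0 := by
      rw [inner_smul_left, hψw, mul_zero]
    rw [h1]
    simp only [map_zero, mul_zero, add_zero]
    rw [norm_smul]
    simp only [Complex.norm_real, Real.norm_eq_abs,
      abs_of_nonneg (Real.sqrt_nonneg lam), hψn, mul_one]
    rw [Real.sq_sqrt hlam.le]
  -- Cauchy–Schwarz against the projection onto `A·Ỹ`
  set W := Submodule.map (A : H →ₗ[ℂ] H) Yt with hWdef
  set s : ℝ := ‖((Submodule.orthogonalProjectionOnto W ψ : W) : H)‖ with hsdef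
  have hCS : Real.sqrt lam ≤ ‖φ‖ * s := by
    have h1 : (inner ℂ φ ((Submodule.orthogonalProjectionOnto W ψ : W) : H) : ℂ) = inner ℂ φ ψ :=
      inner_proj_of_mem W ψ hφmem
    have h2 : ‖(inner ℂ φ ((Submodule.orthogonalProjectionOnto W ψ : W) : H) : ℂ)‖ ≤ ‖φ‖ * s :=
      norm_inner_le_norm _ _
    rw [h1, hφψ] at h2
    calc Real.sqrt lam = ‖((Real.sqrt lam : ℝ) : ℂ)‖ := by
          simp [abs_of_nonneg (Real.sqrt_nonneg lam)]
      _ ≤ ‖φ‖ * s := h2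
  have hCS2 : lam ≤ (lam + ‖w‖ ^ 2) * s ^ 2 := by
    have h1 : (Real.sqrt lam) ^ 2 ≤ (‖φ‖ * s) ^ 2 :=
      pow_le_pow_left₀ (Real.sqrt_nonneg lam) hCS 2
    rw [Real.sq_sqrt hlam.le] at h1
    calc lam ≤ (‖φ‖ * s) ^ 2 := h1
      _ = ‖φ‖ ^ 2 * s ^ 2 := by ring
      _ = (lam + ‖w‖ ^ 2) * s ^ 2 := by rw [hφn]
  have hkey : (1 - δ) ≤ ((1 - δ) + σ * δ) * s ^ 2 :=
    real_aux2 hδ0 hδ1 hσ hlam hwn2 humu hCS2 (sq_nonneg s) (sq_nonneg _)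
  have hpos : (0:ℝ) < (1 - δ) + σ * δ := by positivity
  rw [div_le_iff₀ hpos]
  linarith [hkey]
end

section
/- Let λ_1, λ_2, … ≥ 0 with Σ_i λ_i = 1, and h(λ) = −λ log λ (with h(0)=0). Suppose for every t ≥ τ ≥ 1, the number of indices i with λ_i ≥ e^{−t} is at most r(e^{−t}) for a nonincreasing function r. Then the entropy satisfies Σ_i h(λ_i) ≤ τ + ∫_τ^∞ ∫_s^∞ r(e^{−t}) e^{−t} dt ds. -/
/- STATEMENT 17: the entropy integral bound
`Σ_i h(λ_i) ≤ τ + ∫_τ^∞ ∫_s^∞ r(e^{−t}) e^{−t} dt ds`, stated with lower Lebesgue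
integrals to give the improper double integral its proper meaning. -/

open MeasureTheory Set ENNReal

lemma finite_ge_aux (lam : ℕ → ℝ) (hsum : Summable lam) {ε : ℝ} (hε : 0 < ε) :
    {i : ℕ | ε ≤ lam i}.Finite := by
  have h : ∀ᶠ i in Filter.cofinite, lam i < ε :=
    hsum.tendsto_cofinite_zero.eventually_lt_const hε
  rw [Filter.eventually_cofinite] at h
  exact h.subset (fun i hi => by simp only [mem_setOf_eq] at *; linarith)

lemma exp_lintegral (a : ℝ) :
    ∫⁻ t in Ioi a, ENNReal.ofReal (Real.exp (-t)) = ENNReal.ofReal (Real.exp (-a)) := by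
  rw [← integral_exp_neg_Ioi a]
  rw [← ofReal_integral_eq_lintegral_ofReal]
  · have : IntegrableOn (fun x : ℝ => Real.exp (-(1:ℝ) * x)) (Ioi a) :=
      exp_neg_integrableOn_Ioi a one_pos
    exact (by simpa using this : IntegrableOn (fun x : ℝ => Real.exp (-x)) (Ioi a))
  · filter_upwards with x using (Real.exp_pos _).le

theorem stmt17 (lam : ℕ → ℝ) (hnn : ∀ i, 0 ≤ lam i) (hsum : HasSum lam 1)
    (τ : ℝ) (hτ : 1 ≤ τ) (r : ℝ → ℝ) (hr : Antitone r)
    (hcount : ∀ t : ℝ, τ ≤ t →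
      (({i : ℕ | Real.exp (-t) ≤ lam i}.ncard : ℝ)) ≤ r (Real.exp (-t))) :
    ∑' i, ENNReal.ofReal (-(lam i) * Real.log (lam i)) ≤
      ENNReal.ofReal τ +
        ∫⁻ s in Set.Ici τ, ∫⁻ t in Set.Ici s,
          ENNReal.ofReal (r (Real.exp (-t)) * Real.exp (-t)) := by
  classical
  have hτ0 : (0:ℝ) ≤ τ := le_trans zero_le_one hτ
  -- inner per-index functions
  set F : ℕ → ℝ → ℝ≥0∞ := fun i x =>
    if lam i ≤ Real.exp (-x) then ENNReal.ofReal (lam i) else 0 with hF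
  set G : ℕ → ℝ → ℝ≥0∞ := fun i t =>
    if Real.exp (-t) ≤ lam i then ENNReal.ofReal (Real.exp (-t)) else 0 with hG
  have measF : ∀ i, Measurable (F i) := by
    intro i
    exact Measurable.ite
      (measurableSet_le measurable_const (Real.measurable_exp.comp measurable_neg))
      measurable_const measurable_const
  have measG : ∀ i, Measurable (G i) := by
    intro i
    exact Measurable.ite
      (measurableSet_le (Real.measurable_exp.comp measurable_neg) measurable_const)
      ((Real.measurable_exp.comp measurable_neg).ennreal_ofReal) measurable_const
  -- Claim A : pointwise bound
  have claimA : ∀ i, ENNReal.ofReal (-(lam i) * Real.log (lam i)) ≤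
      ENNReal.ofReal (τ * lam i) + ∫⁻ x in Ici τ, F i x := by
    intro i
    rcases eq_or_lt_of_le (hnn i) with h0 | hpos
    · simp [← h0]
    by_cases hbig : Real.exp (-τ) < lam i
    · -- big eigenvalue: entropy ≤ τ λ
      have hlog : -Real.log (lam i) ≤ τ := by
        have := Real.log_lt_log (Real.exp_pos (-τ)) hbig
        rw [Real.log_exp] at this; linarith
      have : -(lam i) * Real.log (lam i) ≤ τ * lam i := by
        have := mul_le_mul_of_nonneg_left hlog (hnn i)
        nlinarith
      exact le_trans (ENNReal.ofReal_le_ofReal this) le_self_add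
    · push_neg at hbig
      set t := -Real.log (lam i) with ht
      have htτ : τ ≤ t := by
        have := Real.log_le_log hpos hbig
        rw [Real.log_exp] at this; linarith
      have hset : {x : ℝ | lam i ≤ Real.exp (-x)} = Iic t := by
        ext x
        simp only [mem_setOf_eq, mem_Iic]
        rw [← Real.log_le_iff_le_exp hpos]
        constructor <;> intro h <;> linarith
      have hFind : F i = (Iic t).indicator (fun _ => ENNReal.ofReal (lam i)) := by
        rw [← hset]
        funext x
        simp [hF, Set.indicator_apply, mem_setOf_eq]
      have hint : ∫⁻ x in Ici τ, F i x = ENNReal.ofReal (lam i) * ENNReal.ofReal (t - τ) := by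
        rw [hFind, lintegral_indicator measurableSet_Iic, Measure.restrict_restrict measurableSet_Iic,
          lintegral_const, Measure.restrict_apply MeasurableSet.univ, univ_inter,
          Iic_inter_Ici, Real.volume_Icc]
      rw [hint, ← ENNReal.ofReal_mul (hnn i), ← ENNReal.ofReal_add (by positivity)
        (by have := hnn i; nlinarith)]
      apply ENNReal.ofReal_le_ofReal
      have hexp : lam i = Real.exp (-t) := by
        rw [ht, neg_neg, Real.exp_log hpos]
      nlinarith [hnn i]
  -- Claim B : for s ≥ τ, sum of small eigenvalues bounded by inner integral
  have claimB : ∀ s, τ ≤ s →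
      (∑' i, F i s) ≤ ∫⁻ t in Ici s, ENNReal.ofReal (r (Real.exp (-t)) * Real.exp (-t)) := by
    intro s hs
    have step1 : ∀ i, F i s ≤ ∫⁻ t in Ici s, G i t := by
      intro i
      by_cases hsm : lam i ≤ Real.exp (-s)
      · rcases eq_or_lt_of_le (hnn i) with h0 | hpos
        · simp [hF, ← h0]
        set ti := -Real.log (lam i) with hti
        have htis : s ≤ ti := by
          have := Real.log_le_log hpos hsm
          rw [Real.log_exp] at this; linarith
        have hset : {x : ℝ | Real.exp (-x) ≤ lam i} = Ici ti := by
          ext x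
          simp only [mem_setOf_eq, mem_Ici]
          rw [← Real.le_log_iff_exp_le hpos]
          constructor <;> intro h <;> linarith
        have hGind : G i = (Ici ti).indicator (fun x => ENNReal.ofReal (Real.exp (-x))) := by
          rw [← hset]
          funext x
          simp [hG, Set.indicator_apply, mem_setOf_eq]
        have : ∫⁻ t in Ici s, G i t = ∫⁻ t in Ici ti, ENNReal.ofReal (Real.exp (-t)) := by
          rw [hGind, lintegral_indicator measurableSet_Ici,
            Measure.restrict_restrict measurableSet_Ici, Ici_inter_Ici,
            max_eq_left htis]
        rw [this, ← restrict_Ioi_eq_restrict_Ici, exp_lintegral]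
        have : F i s = ENNReal.ofReal (lam i) := by rw [hF]; simp [hsm]
        rw [this]
        apply ENNReal.ofReal_le_ofReal
        rw [hti, neg_neg, Real.exp_log hpos]
      · have : F i s = 0 := by rw [hF]; simp [hsm]
        rw [this]; exact zero_le
    calc (∑' i, F i s) ≤ ∑' i, ∫⁻ t in Ici s, G i t := ENNReal.tsum_le_tsum step1
      _ = ∫⁻ t in Ici s, ∑' i, G i t := (lintegral_tsum (fun i => (measG i).aemeasurable)).symm
      _ ≤ ∫⁻ t in Ici s, ENNReal.ofReal (r (Real.exp (-t)) * Real.exp (-t)) := by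
          apply lintegral_mono_ae
          rw [ae_restrict_iff' measurableSet_Ici]
          filter_upwards with t ht
          have hts : τ ≤ t := le_trans hs ht
          have hfin : {i : ℕ | Real.exp (-t) ≤ lam i}.Finite :=
            finite_ge_aux lam hsum.summable (Real.exp_pos _)
          have hcard : (∑' i, G i t) =
              ({i : ℕ | Real.exp (-t) ≤ lam i}.ncard : ℝ≥0∞) * ENNReal.ofReal (Real.exp (-t)) := by
            have : ∀ i, G i t = Set.indicator {i : ℕ | Real.exp (-t) ≤ lam i}
                (fun _ => ENNReal.ofReal (Real.exp (-t))) i := by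
              intro i
              simp [hG, Set.indicator_apply, mem_setOf_eq]
            rw [tsum_congr this, ← tsum_subtype, ENNReal.tsum_set_const, ← hfin.cast_ncard_eq]
            norm_cast
          rw [hcard]
          have h1 : ({i : ℕ | Real.exp (-t) ≤ lam i}.ncard : ℝ≥0∞) =
              ENNReal.ofReal (({i : ℕ | Real.exp (-t) ≤ lam i}.ncard : ℝ)) := by
            rw [ENNReal.ofReal_natCast]
          rw [h1, ← ENNReal.ofReal_mul (Nat.cast_nonneg _)]
          exact ENNReal.ofReal_le_ofReal
            (mul_le_mul_of_nonneg_right (hcount t hts) (Real.exp_pos _).le)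
  -- put it together
  calc ∑' i, ENNReal.ofReal (-(lam i) * Real.log (lam i))
      ≤ ∑' i, (ENNReal.ofReal (τ * lam i) + ∫⁻ x in Ici τ, F i x) :=
        ENNReal.tsum_le_tsum claimA
    _ = (∑' i, ENNReal.ofReal (τ * lam i)) + ∑' i, ∫⁻ x in Ici τ, F i x := ENNReal.tsum_add
    _ ≤ ENNReal.ofReal τ + ∫⁻ s in Set.Ici τ, ∫⁻ t in Set.Ici s,
          ENNReal.ofReal (r (Real.exp (-t)) * Real.exp (-t)) := by
        apply add_le_add
        · have : ∀ i, ENNReal.ofReal (τ * lam i) = ENNReal.ofReal τ * ENNReal.ofReal (lam i) :=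
            fun i => ENNReal.ofReal_mul hτ0
          rw [tsum_congr this, ENNReal.tsum_mul_left,
            ← ENNReal.ofReal_tsum_of_nonneg hnn hsum.summable, hsum.tsum_eq]
          simp
        · rw [← lintegral_tsum (fun i => (measF i).aemeasurable)]
          apply lintegral_mono_ae
          rw [ae_restrict_iff' measurableSet_Ici]
          filter_upwards with s hs
          exact claimB s hs
end
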